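/- Let r ≥ h+2 > 4 and suppose real numbers y_{ij} (for each 2-element subset {i,j} of [r]) satisfy: for every h-element subset S of [r], the sum of y_{ij} over all 2-element subsets {i,j} ⊆ S equals C(h,2)·c, for a fixed constant c. Then y_{ij} = c for all pairs {i,j}. -/

import Mathlib

/-!
For distinct `b, b'`, subtracting the equations for `A ∪ {b}` and `A ∪ {b'}` shows that
`x ↦ y {b, x} - y {b', x}` sums to zero over every `(h - 1)`-subset of the complement of `{b, b'}`.
Since `0 < h - 1 < r - 2`, exchanging a single element of such a subset shows this function is
constant there, hence zero. So `y` agrees on any two pairs sharing a point, hence on all pairs,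
and the equation for a single `h`-set gives the common value `c`.
-/

open Finset

variable {α M : Type*} [DecidableEq α]

theorem Finset.sum_powersetCard_succ_insert [AddCommMonoid M] (f : Finset α → M) {x : α}
    {s : Finset α} (hx : x ∉ s) (n : ℕ) :
    ∑ t ∈ (insert x s).powersetCard (n + 1), f t =
      ∑ t ∈ s.powersetCard (n + 1), f t + ∑ t ∈ s.powersetCard n, f (insert x t) := by
  have hinj : Set.InjOn (insert x) (s.powersetCard n : Set (Finset α)) := fun t ht u hu htu => by
    simp only [mem_coe, mem_powersetCard] at ht hu
    rw [← erase_insert (fun h => hx (ht.1 h)), htu, erase_insert (fun h => hx (hu.1 h))]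
  have hdisj : Disjoint (s.powersetCard (n + 1)) ((s.powersetCard n).image (insert x)) := by
    refine disjoint_left.2 fun t ht ht' => ?_
    obtain ⟨u, -, rfl⟩ := mem_image.1 ht'
    exact hx ((mem_powersetCard.1 ht).1 (mem_insert_self x u))
  rw [powersetCard_succ_insert hx, sum_union hdisj, sum_image hinj]

theorem Finset.sum_powersetCard_two_insert [AddCommMonoid M] (f : Finset α → M) {x : α}
    {s : Finset α} (hx : x ∉ s) :
    ∑ t ∈ (insert x s).powersetCard 2, f t =
      ∑ t ∈ s.powersetCard 2, f t + ∑ a ∈ s, f {x, a} := by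
  rw [sum_powersetCard_succ_insert f hx 1, powersetCard_one, sum_map]
  rfl

theorem Finset.eq_of_forall_sum_powersetCard_eq [AddCancelCommMonoid M] {U : Finset α} {k : ℕ}
    (hk : 0 < k) (hkU : k < #U) {g : α → M} {s : M}
    (hg : ∀ A ⊆ U, #A = k → ∑ a ∈ A, g a = s) {x y : α} (hx : x ∈ U) (hy : y ∈ U) :
    g x = g y := by
  obtain rfl | hxy := eq_or_ne x y
  · rfl
  have hxyU : {x, y} ⊆ U := insert_subset hx (singleton_subset_iff.2 hy)
  obtain ⟨B, hBU, hB⟩ := exists_subset_card_eq (show k - 1 ≤ #(U \ {x, y}) by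
    rw [card_sdiff_of_subset hxyU, card_pair hxy]; omega)
  have hxB : x ∉ B := fun h => by simpa using hBU h
  have hyB : y ∉ B := fun h => by simpa using hBU h
  have hBU' : B ⊆ U := hBU.trans sdiff_subset
  have hx' := hg (insert x B) (insert_subset hx hBU') (by rw [card_insert_of_notMem hxB]; omega)
  have hy' := hg (insert y B) (insert_subset hy hBU') (by rw [card_insert_of_notMem hyB]; omega)
  rw [sum_insert hxB] at hx'
  rw [sum_insert hyB, ← hx'] at hy'
  exact (add_right_cancel hy').symm

theorem Finset.eq_zero_of_forall_sum_powersetCard_eq_zero [AddCancelCommMonoid M]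
    [IsAddTorsionFree M] {U : Finset α} {k : ℕ} (hk : 0 < k) (hkU : k < #U) {g : α → M}
    (hg : ∀ A ⊆ U, #A = k → ∑ a ∈ A, g a = 0) {x : α} (hx : x ∈ U) : g x = 0 := by
  obtain ⟨A, hAU, hA⟩ := exists_subset_card_eq hkU.le
  have hsum := hg A hAU hA
  rw [sum_congr rfl fun a ha => eq_of_forall_sum_powersetCard_eq hk hkU hg (hAU ha) hx,
    sum_const, hA] at hsum
  exact IsAddTorsionFree.nsmul_right_injective hk.ne' (hsum.trans (nsmul_zero k).symm)

theorem pair_eq_pair_of_forall_sum_powersetCard_two_eq [Fintype α] [AddCommGroup M]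
    [IsAddTorsionFree M] {h : ℕ} (hh : 2 ≤ h) (hα : h + 2 ≤ Fintype.card α)
    {y : Finset α → M} {s : M} (hsum : ∀ S : Finset α, #S = h → ∑ T ∈ S.powersetCard 2, y T = s)
    ⦃a b b' : α⦄ (hab : a ≠ b) (hab' : a ≠ b') : y {a, b} = y {a, b'} := by
  obtain rfl | hbb' := eq_or_ne b b'
  · rfl
  set U : Finset α := univ \ {b, b'}
  have hU : #U = Fintype.card α - 2 := by
    rw [card_sdiff_of_subset (subset_univ _), card_univ, card_pair hbb']
  have key : ∀ A ⊆ U, #A = h - 1 → ∑ x ∈ A, (y {b, x} - y {b', x}) = 0 := by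
    intro A hAU hA
    have hbA : b ∉ A := fun hb => by simpa [U] using hAU hb
    have hb'A : b' ∉ A := fun hb' => by simpa [U] using hAU hb'
    have e := hsum (insert b A) (by rw [card_insert_of_notMem hbA]; omega)
    have e' := hsum (insert b' A) (by rw [card_insert_of_notMem hb'A]; omega)
    rw [sum_powersetCard_two_insert y hbA] at e
    rw [sum_powersetCard_two_insert y hb'A] at e'
    rw [sum_sub_distrib, sub_eq_zero]
    exact add_left_cancel (e.trans e'.symm)
  have := eq_zero_of_forall_sum_powersetCard_eq_zero (by omega) (by omega) key
    (show a ∈ U by simp [U, hab, hab'])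
  rwa [sub_eq_zero, pair_comm, pair_comm b'] at this

theorem eq_of_card_eq_two_of_forall_pair_eq {y : Finset α → M}
    (hy : ∀ ⦃a b b' : α⦄, a ≠ b → a ≠ b' → y {a, b} = y {a, b'}) {T T' : Finset α}
    (hT : #T = 2) (hT' : #T' = 2) : y T = y T' := by
  obtain ⟨a, b, hab, rfl⟩ := card_eq_two.1 hT
  obtain ⟨a', b', hab', rfl⟩ := card_eq_two.1 hT'
  obtain rfl | hb'a := eq_or_ne b' a
  · rw [hy hab hab'.symm, pair_comm]
  · rw [hy hab hb'a.symm, pair_comm, hy hb'a hab'.symm, pair_comm]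

theorem inclusion_system_unique_solution (r h : ℕ) (hh : 2 < h) (hr : h + 2 ≤ r)
    (y : Finset (Fin r) → ℝ) (c : ℝ)
    (hsum : ∀ S : Finset (Fin r), S.card = h →
      ∑ T ∈ S.powersetCard 2, y T = (h.choose 2 : ℝ) * c) :
    ∀ T : Finset (Fin r), T.card = 2 → y T = c := by
  have hpair := pair_eq_pair_of_forall_sum_powersetCard_two_eq hh.le (by simpa using hr) hsum
  intro T hT
  obtain ⟨S, -, hS⟩ := exists_subset_card_eq (show h ≤ #(univ : Finset (Fin r)) by simp; omega)
  have hS_sum := hsum S hS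
  rw [sum_congr rfl fun T' hT' =>
      eq_of_card_eq_two_of_forall_pair_eq hpair (mem_powersetCard.1 hT').2 hT,
    sum_const, card_powersetCard, hS, nsmul_eq_mul] at hS_sum
  exact mul_left_cancel₀ (Nat.cast_ne_zero.2 (Nat.choose_pos hh.le).ne') hS_sum
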